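/- arXiv:1808.06129 — 3 statements merged into one kernel-verified Lean document; each statement's English description precedes it below -/
import Mathlib

section
/- Let V(x,y) = a(x)b(y) where a ∈ C¹(ℝ) is bounded with a(x) > 0 for all x ∈ ℝ, and b ∈ C²(ℝ) is 1-periodic with b ≤ 0 and max b = 0. Let u₀ : ℝ → ℝ be bounded and Lipschitz with Lipschitz constant Lip(u₀), and let ‖V‖_∞ = sup_{(x,y)} |V(x,y)|. Fix ε ∈ (0,1), x₀ ∈ ℝ, t₀ > 0. Let m be the infimum of A^ε[η] over all differentiable paths η : [0, t₀/ε] → ℝ with η(0) = x₀/ε for which there exists a constant r ≤ 0 with ½|η′(s)|² + V(εη(s), η(s)) = r for all s ∈ [0, t₀/ε] (the Euler–Lagrange trajectories of nonpositive energy; this class is nonempty). Then |m − u₀(x₀)| ≤ ( √(2‖V‖_∞) + Lip(u₀) )·ε. -/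
/-!
Write `P y = V(εy, y) = a(εy) b(y) ≤ 0`. Along a path of energy `r ≤ 0` the Lagrangian is
`½η'² - P(η) = η'² - r ≥ 0`. Since `b` is `C²` and maximal at its zeros, `-P` vanishes
quadratically there; so a path of nonpositive energy that reaches a zero `z` has energy `0`,
satisfies `|η'| ≤ C |η - z|`, and by Grönwall stays at `z`. Hence the path cannot leave the
period cell of zeros around `x₀/ε`, which gives the lower bound `u₀(x₀) - Lip(u₀) ε`.

For the upper bound, follow the zero-energy flow `η' = -√(-2P(η))` from `x₀/ε` towards the
nearest zero `z` below. The speed vanishes linearly at `z`, so the travel time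
`τ(y) = ∫ dy / √(-2P)` diverges there and the inverse of `τ` is a flow defined for all times,
trapped in `(z, x₀/ε]`. Its action is `ε∫η'² ≤ ε √(2‖V‖_∞) (η(0) - η(T)) ≤ ε √(2‖V‖_∞)`, and
its endpoint term is within `Lip(u₀) ε` of `u₀(x₀)`.
-/

/-- The action of a path `η` (with derivative `η'`) on `[0, t₀/ε]`:
`A^ε[η] = ε∫₀^{t₀/ε} (½|η′|² − V(εη, η)) ds + u₀(εη(t₀/ε))`. -/
noncomputable def actionEps (V : ℝ → ℝ → ℝ) (u₀ : ℝ → ℝ) (ε t₀ : ℝ)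
    (η η' : ℝ → ℝ) : ℝ :=
  ε * (∫ s in (0 : ℝ)..(t₀ / ε), ((η' s) ^ 2 / 2 - V (ε * η s) (η s)))
    + u₀ (ε * η (t₀ / ε))

open Set MeasureTheory intervalIntegral Real

theorem Function.Periodic.deriv {f : ℝ → ℝ} {c : ℝ} (hf : Function.Periodic f c) :
    Function.Periodic (deriv f) c := fun x => by
  rw [← deriv_comp_add_const, funext hf]

theorem abs_sub_le_mul_sq_of_deriv_eq_zero {f : ℝ → ℝ} {K z : ℝ} (hf : ContDiff ℝ 2 f)
    (hK : ∀ x, |deriv (deriv f) x| ≤ K) (hz : deriv f z = 0) (y : ℝ) :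
    |f y - f z| ≤ K * (y - z) ^ 2 := by
  have hf' : ContDiff ℝ 1 (deriv f) := hf.deriv'
  have hslope : ∀ c ∈ uIcc z y, |deriv f c| ≤ K * |y - z| := fun c hc => by
    have := Convex.norm_image_sub_le_of_norm_deriv_le
      (fun x _ => hf'.differentiable one_ne_zero x) (fun x _ => hK x) convex_univ
      (mem_univ z) (mem_univ c)
    rw [hz, sub_zero] at this
    exact this.trans (mul_le_mul_of_nonneg_left (abs_sub_left_of_mem_uIcc hc)
      ((abs_nonneg _).trans (hK 0)))
  calc |f y - f z| ≤ K * |y - z| * |y - z| :=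
        Convex.norm_image_sub_le_of_norm_deriv_le (fun x _ => hf.differentiable (by norm_num) x)
          hslope (convex_uIcc z y) left_mem_uIcc right_mem_uIcc
    _ = K * (y - z) ^ 2 := by rw [mul_assoc, abs_mul_abs_self, sq]

theorem exists_abs_sub_le_mul_sq_of_periodic {f : ℝ → ℝ} {c : ℝ} (hf : ContDiff ℝ 2 f)
    (hp : Function.Periodic f c) (hc : c ≠ 0) :
    ∃ K, ∀ z y, deriv f z = 0 → |f y - f z| ≤ K * (y - z) ^ 2 := by
  have hf'' : Continuous (deriv (deriv f)) := (hf.deriv' (n := 1)).continuous_deriv le_rfl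
  obtain ⟨K, hK⟩ := (hp.deriv.deriv.isBounded_of_continuous hc hf'').exists_norm_le
  exact ⟨K, fun z y hz =>
    abs_sub_le_mul_sq_of_deriv_eq_zero hf (fun x => hK _ (mem_range_self x)) hz y⟩

theorem neg_mul_le_iSup_abs_mul {a b : ℝ → ℝ} {M B : ℝ} (ha : ∀ x, |a x| ≤ M)
    (hb : ∀ y, |b y| ≤ B) (x y : ℝ) : -(a x * b y) ≤ ⨆ q : ℝ × ℝ, |a q.1 * b q.2| := by
  have hbdd : BddAbove (range fun q : ℝ × ℝ => |a q.1 * b q.2|) := ⟨M * B, by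
    rintro _ ⟨q, rfl⟩
    show |a q.1 * b q.2| ≤ M * B
    rw [abs_mul]
    exact mul_le_mul (ha _) (hb _) (abs_nonneg _) ((abs_nonneg _).trans (ha q.1))⟩
  exact (neg_le_abs _).trans (le_ciSup hbdd (x, y))

theorem exists_Ioo_forall_ne_zero {f : ℝ → ℝ} {a b x : ℝ} (hf : Continuous f) (ha : f a = 0)
    (hb : f b = 0) (hx : x ∈ Icc a b) (hfx : f x ≠ 0) :
    ∃ z w, a ≤ z ∧ x ∈ Ioo z w ∧ f z = 0 ∧ ∀ y ∈ Ioo z w, f y ≠ 0 := by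
  have hzeros : IsClosed (f ⁻¹' {0}) := isClosed_singleton.preimage hf
  obtain ⟨z, ⟨⟨haz, hzx⟩, hz⟩, hzmax⟩ :=
    (isCompact_Icc.inter_right hzeros).exists_isGreatest ⟨a, ⟨le_rfl, hx.1⟩, ha⟩
  obtain ⟨w, ⟨⟨hxw, hwb⟩, hw⟩, hwmin⟩ :=
    (isCompact_Icc.inter_right hzeros).exists_isLeast ⟨b, ⟨hx.2, le_rfl⟩, hb⟩
  refine ⟨z, w, haz, ⟨hzx.lt_of_ne ?_, hxw.lt_of_ne ?_⟩, hz, ?_⟩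
  · rintro rfl; exact hfx hz
  · rintro rfl; exact hfx hw
  rintro y ⟨hzy, hyw⟩ hy
  rcases le_total y x with hyx | hxy
  · exact (hzmax ⟨⟨haz.trans hzy.le, hyx⟩, hy⟩).not_gt hzy
  · exact (hwmin ⟨⟨hxy, hyw.le.trans hwb⟩, hy⟩).not_gt hyw

theorem exists_integral_inv_le {g : ℝ → ℝ} {L z X : ℝ} (hg : Continuous g)
    (hpos : ∀ y ∈ Ioc z X, 0 < g y) (hlin : ∀ y ∈ Ioc z X, g y ≤ L * (y - z)) (hzX : z < X)
    {s : ℝ} (hs : s ≤ 0) : ∃ y ∈ Ioc z X, ∫ v in X..y, (g v)⁻¹ ≤ s := by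
  have hXmem : X ∈ Ioc z X := ⟨hzX, le_rfl⟩
  have hL : 0 < L := pos_of_mul_pos_left ((hpos X hXmem).trans_le (hlin X hXmem)) (by linarith)
  set y := z + (X - z) * exp (L * s)
  have hyz : y - z = (X - z) * exp (L * s) := by ring
  have hymem : y ∈ Ioc z X := by
    have : exp (L * s) ≤ 1 := exp_le_one_iff.mpr (mul_nonpos_of_nonneg_of_nonpos hL.le hs)
    constructor <;> nlinarith [exp_pos (L * s)]
  have hsub : Icc y X ⊆ Ioc z X := Icc_subset_Ioc hymem.1 le_rfl
  refine ⟨y, hymem, ?_⟩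
  have hcomp : L⁻¹ * log ((X - z) / (y - z)) ≤ ∫ v in y..X, (g v)⁻¹ := by
    have hlog : ∫ v in y..X, (L * (v - z))⁻¹ = L⁻¹ * log ((X - z) / (y - z)) := by
      simp_rw [mul_inv]
      rw [intervalIntegral.integral_const_mul, intervalIntegral.integral_comp_sub_right
        (fun v => v⁻¹), integral_inv_of_pos (by linarith [hymem.1]) (by linarith)]
    rw [← hlog]
    refine intervalIntegral.integral_mono_on hymem.2 ?_ ?_ fun v hv =>
      inv_anti₀ (hpos v (hsub hv)) (hlin v (hsub hv))
    · refine ContinuousOn.intervalIntegrable fun v hv => ?_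
      rw [uIcc_of_le hymem.2] at hv
      exact (ContinuousAt.inv₀ (f := fun v => L * (v - z)) (by fun_prop)
        (mul_pos hL (sub_pos.mpr (hsub hv).1)).ne').continuousWithinAt
    · refine ContinuousOn.intervalIntegrable fun v hv => ?_
      rw [uIcc_of_le hymem.2] at hv
      exact (hg.continuousAt.inv₀ (hpos v (hsub hv)).ne').continuousWithinAt
  rw [hyz, div_mul_cancel_left₀ (by linarith), ← exp_neg, log_exp, mul_neg,
    inv_mul_cancel_left₀ hL.ne'] at hcomp
  rw [intervalIntegral.integral_symm]
  linarith

theorem exists_hasDerivAt_inverse_of_strictMonoOn {τ τ' : ℝ → ℝ} {I : Set ℝ} {c : ℝ}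
    (hI : IsOpen I) (hmono : StrictMonoOn τ I) (hτ : ∀ y ∈ I, HasDerivAt τ (τ' y) y)
    (hτ' : ∀ y ∈ I, τ' y ≠ 0) (hsurj : Iio c ⊆ τ '' I) :
    ∃ φ : ℝ → ℝ, ∀ s < c, φ s ∈ I ∧ τ (φ s) = s ∧ HasDerivAt φ (τ' (φ s))⁻¹ s := by
  set φ := Function.invFunOn τ I
  have hφ : ∀ s < c, φ s ∈ I ∧ τ (φ s) = s := fun s hs => Function.invFunOn_pos (hsurj hs)
  have hφmono : StrictMonoOn φ (Iio c) := fun s hs t ht hst => by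
    rwa [← hmono.lt_iff_lt (hφ s hs).1 (hφ t ht).1, (hφ s hs).2, (hφ t ht).2]
  have himage : φ '' Iio c = I ∩ τ ⁻¹' Iio c := by
    ext y
    constructor
    · rintro ⟨t, ht, rfl⟩
      exact ⟨(hφ t ht).1, by simpa [(hφ t ht).2] using ht⟩
    · rintro ⟨hy, hyc⟩
      exact ⟨τ y, hyc, hmono.injOn (hφ _ hyc).1 hy (hφ _ hyc).2⟩
  have hopen : IsOpen (I ∩ τ ⁻¹' Iio c) :=
    ContinuousOn.isOpen_inter_preimage (fun y hy => (hτ y hy).continuousAt.continuousWithinAt)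
      hI isOpen_Iio
  refine ⟨φ, fun s hs => ⟨(hφ s hs).1, (hφ s hs).2, ?_⟩⟩
  have hcont : ContinuousAt φ s := hφmono.continuousAt_of_image_mem_nhds (Iio_mem_nhds hs)
    (himage ▸ hopen.mem_nhds ⟨(hφ s hs).1, by simpa [(hφ s hs).2] using hs⟩)
  exact HasDerivAt.of_local_left_inverse hcont (hτ _ (hφ s hs).1) (hτ' _ (hφ s hs).1)
    (Filter.eventually_of_mem (Iio_mem_nhds hs) fun t ht => (hφ t ht).2)

theorem exists_hasDerivAt_eq_neg_comp {g : ℝ → ℝ} {L z w X : ℝ} (hg : Continuous g)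
    (hpos : ∀ y ∈ Ioo z w, 0 < g y) (hlin : ∀ y ∈ Ioc z X, g y ≤ L * (y - z))
    (hX : X ∈ Ioo z w) :
    ∃ η : ℝ → ℝ, η 0 = X ∧ ∀ s, 0 ≤ s → η s ∈ Ioc z X ∧ HasDerivAt η (-g (η s)) s := by
  set τ : ℝ → ℝ := fun y => ∫ v in X..y, (g v)⁻¹
  have hsub : ∀ {y}, y ∈ Ioo z w → uIcc X y ⊆ Ioo z w := fun hy =>
    ordConnected_Ioo.uIcc_subset hX hy
  have hτ : ∀ y ∈ Ioo z w, HasDerivAt τ (g y)⁻¹ y := fun y hy =>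
    integral_hasDerivAt_right
      (ContinuousOn.intervalIntegrable fun v hv =>
        (hg.continuousAt.inv₀ (hpos v (hsub hy hv)).ne').continuousWithinAt)
      (hg.measurable.inv.stronglyMeasurable.stronglyMeasurableAtFilter)
      (hg.continuousAt.inv₀ (hpos y hy).ne')
  have hmono : StrictMonoOn τ (Ioo z w) :=
    strictMonoOn_of_deriv_pos (convex_Ioo z w)
      (fun y hy => (hτ y hy).continuousAt.continuousWithinAt) fun y hy => by
        rw [interior_Ioo] at hy
        rw [(hτ y hy).deriv]
        exact inv_pos.mpr (hpos y hy)
  obtain ⟨X', hXX', hX'w⟩ := exists_between hX.2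
  have hX' : X' ∈ Ioo z w := ⟨hX.1.trans hXX', hX'w⟩
  have hτX : τ X = 0 := integral_same
  have hc : 0 < τ X' := hτX ▸ hmono hX hX' hXX'
  have hsurj : Iio (τ X') ⊆ τ '' Ioo z w := by
    intro s hs
    obtain ⟨y, hy, hys⟩ := exists_integral_inv_le hg (fun y hy => hpos y ⟨hy.1, hy.2.trans_lt hX.2⟩)
      hlin hX.1 (min_le_right s 0)
    have hy' : y ∈ Ioo z w := ⟨hy.1, hy.2.trans_lt hX.2⟩
    have hconn : IsPreconnected (τ '' Ioo z w) := isPreconnected_Ioo.image τ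
      fun y hy => (hτ y hy).continuousAt.continuousWithinAt
    exact hconn.Icc_subset (mem_image_of_mem τ hy') (mem_image_of_mem τ hX')
      ⟨(hys.trans (min_le_left s 0)), hs.le⟩
  obtain ⟨φ, hφ⟩ := exists_hasDerivAt_inverse_of_strictMonoOn isOpen_Ioo hmono hτ
    (fun y hy => (inv_pos.mpr (hpos y hy)).ne') hsurj
  have hφX : φ 0 = X := hmono.injOn (hφ 0 hc).1 hX ((hφ 0 hc).2.1.trans hτX.symm)
  refine ⟨fun s => φ (-s), by simpa using hφX, fun s hs => ?_⟩
  obtain ⟨hmem, hτφ, hderiv⟩ := hφ (-s) (by linarith)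
  refine ⟨⟨hmem.1, ?_⟩, ?_⟩
  · rw [← hmono.le_iff_le hmem hX, hτφ, hτX]
    linarith
  · have := hderiv.comp s (hasDerivAt_neg s)
    rw [inv_inv, mul_neg_one] at this
    exact this

section Energy

variable {P : ℝ → ℝ} {η η' : ℝ → ℝ} {C r T : ℝ}

theorem eq_of_energy_of_eq_zero {s₁ z : ℝ} (hs₁ : s₁ ≤ T)
    (hd : ∀ s ∈ Icc s₁ T, HasDerivAt η (η' s) s)
    (hE : ∀ s ∈ Icc s₁ T, η' s ^ 2 / 2 + P (η s) = r) (hr : r ≤ 0)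
    (hPz : P z = 0) (hquad : ∀ y, -P y ≤ C * (y - z) ^ 2) (hη₁ : η s₁ = z) : η T = z := by
  have hr0 : r = 0 := by
    have := hE s₁ ⟨le_rfl, hs₁⟩
    rw [hη₁, hPz] at this
    nlinarith [sq_nonneg (η' s₁)]
  have hbound : ∀ s ∈ Icc s₁ T, |η' s| ≤ √(2 * C) * |η s - z| := fun s hs => by
    have hsq : η' s ^ 2 ≤ 2 * C * (η s - z) ^ 2 := by
      have := hE s hs
      nlinarith [hquad (η s)]
    rw [← sqrt_sq_eq_abs, ← sqrt_sq_eq_abs (η s - z), ← sqrt_mul' _ (sq_nonneg _)]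
    exact sqrt_le_sqrt hsq
  have := eq_zero_of_abs_deriv_le_mul_abs_self_of_eq_zero_right (f := fun s => η s - z)
    (fun s hs => ((hd s hs).continuousAt.sub continuousAt_const).continuousWithinAt)
    (fun s hs => ((hd s (Ico_subset_Icc_self hs)).sub_const z).hasDerivWithinAt)
    (sub_eq_zero.mpr hη₁) (fun s hs => hbound s (Ico_subset_Icc_self hs)) T ⟨hs₁, le_rfl⟩
  exact sub_eq_zero.mp this

theorem mem_Icc_of_energy {z₁ z₂ : ℝ} (hT : 0 ≤ T) (hd : ∀ s ∈ Icc 0 T, HasDerivAt η (η' s) s)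
    (hE : ∀ s ∈ Icc 0 T, η' s ^ 2 / 2 + P (η s) = r) (hr : r ≤ 0)
    (hquad : ∀ z, P z = 0 → ∀ y, -P y ≤ C * (y - z) ^ 2) (hz₁ : P z₁ = 0) (hz₂ : P z₂ = 0)
    (hη₀ : η 0 ∈ Icc z₁ z₂) : η T ∈ Icc z₁ z₂ := by
  have hstay : ∀ z, P z = 0 → z ∈ uIcc (η 0) (η T) → η T = z := fun z hz hzmem => by
    have hcont : ContinuousOn η (uIcc 0 T) := fun s hs =>
      (hd s (by rwa [uIcc_of_le hT] at hs)).continuousAt.continuousWithinAt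
    obtain ⟨s₁, hs₁, hηs₁⟩ := intermediate_value_uIcc hcont hzmem
    rw [uIcc_of_le hT] at hs₁
    exact eq_of_energy_of_eq_zero hs₁.2 (fun s hs => hd s ⟨hs₁.1.trans hs.1, hs.2⟩)
      (fun s hs => hE s ⟨hs₁.1.trans hs.1, hs.2⟩) hr hz (hquad z hz) hηs₁
  constructor
  · by_contra! h
    exact h.ne (hstay z₁ hz₁ (mem_uIcc.mpr (Or.inr ⟨h.le, hη₀.1⟩)))
  · by_contra! h
    exact h.ne' (hstay z₂ hz₂ (mem_uIcc.mpr (Or.inl ⟨hη₀.2, h.le⟩)))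

theorem integral_sq_le_mul_sub {G : ℝ} (hT : 0 ≤ T) (hd : ∀ s ∈ Icc 0 T, HasDerivAt η (η' s) s)
    (hη' : ContinuousOn η' (Icc 0 T)) (hG : ∀ s ∈ Icc 0 T, -G ≤ η' s ∧ η' s ≤ 0) :
    ∫ s in 0..T, η' s ^ 2 ≤ G * (η 0 - η T) := by
  have hint : IntervalIntegrable η' volume 0 T := (uIcc_of_le hT ▸ hη').intervalIntegrable
  have hFTC : ∫ s in 0..T, η' s = η T - η 0 :=
    integral_eq_sub_of_hasDerivAt (fun s hs => hd s (uIcc_of_le hT ▸ hs)) hint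
  calc ∫ s in 0..T, η' s ^ 2 ≤ ∫ s in 0..T, -G * η' s :=
        integral_mono_on hT ((uIcc_of_le hT ▸ hη'.pow 2).intervalIntegrable)
          (hint.const_mul _) fun s hs => by nlinarith [hG s hs]
    _ = G * (η 0 - η T) := by rw [intervalIntegral.integral_const_mul, hFTC]; ring

end Energy

section Action

variable {V : ℝ → ℝ → ℝ} {u₀ : ℝ → ℝ} {η η' : ℝ → ℝ} {Lu ε t₀ x₀ : ℝ}

theorem abs_sub_le_of_abs_sub_div_le_one (hε : 0 < ε)
    (hLu : ∀ x y, |u₀ x - u₀ y| ≤ Lu * |x - y|) {y : ℝ} (hy : |y - x₀ / ε| ≤ 1) :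
    |u₀ (ε * y) - u₀ x₀| ≤ Lu * ε := by
  have hLu0 : 0 ≤ Lu := by simpa using (abs_nonneg _).trans (hLu 0 1)
  calc |u₀ (ε * y) - u₀ x₀| ≤ Lu * |ε * y - x₀| := hLu _ _
    _ = Lu * ε * |y - x₀ / ε| := by
        rw [show ε * y - x₀ = ε * (y - x₀ / ε) by field_simp, abs_mul, abs_of_pos hε, mul_assoc]
    _ ≤ Lu * ε := mul_le_of_le_one_right (by positivity) hy

theorem sub_le_actionEps {r : ℝ} (hε : 0 < ε) (ht₀ : 0 < t₀)
    (hLu : ∀ x y, |u₀ x - u₀ y| ≤ Lu * |x - y|)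
    (hE : ∀ s ∈ Icc 0 (t₀ / ε), η' s ^ 2 / 2 + V (ε * η s) (η s) = r) (hr : r ≤ 0)
    (hend : |η (t₀ / ε) - x₀ / ε| ≤ 1) : u₀ x₀ - Lu * ε ≤ actionEps V u₀ ε t₀ η η' := by
  have hint : 0 ≤ ∫ s in 0..t₀ / ε, (η' s ^ 2 / 2 - V (ε * η s) (η s)) :=
    integral_nonneg (div_pos ht₀ hε).le fun s hs => by nlinarith [hE s hs, sq_nonneg (η' s)]
  have hu := abs_le.mp (abs_sub_le_of_abs_sub_div_le_one hε hLu hend)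
  unfold actionEps
  linarith [mul_nonneg hε.le hint]

theorem actionEps_le {G : ℝ} (hε : 0 < ε) (ht₀ : 0 < t₀)
    (hLu : ∀ x y, |u₀ x - u₀ y| ≤ Lu * |x - y|)
    (hd : ∀ s ∈ Icc 0 (t₀ / ε), HasDerivAt η (η' s) s) (hη' : ContinuousOn η' (Icc 0 (t₀ / ε)))
    (hG : ∀ s ∈ Icc 0 (t₀ / ε), -G ≤ η' s ∧ η' s ≤ 0)
    (hE : ∀ s ∈ Icc 0 (t₀ / ε), η' s ^ 2 / 2 + V (ε * η s) (η s) = 0)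
    (hη₀ : η 0 = x₀ / ε) (hend : η (t₀ / ε) ∈ Icc (x₀ / ε - 1) (x₀ / ε)) :
    actionEps V u₀ ε t₀ η η' ≤ u₀ x₀ + (G + Lu) * ε := by
  have hT : 0 ≤ t₀ / ε := (div_pos ht₀ hε).le
  have hkin : ∫ s in 0..t₀ / ε, (η' s ^ 2 / 2 - V (ε * η s) (η s)) = ∫ s in 0..t₀ / ε, η' s ^ 2 :=
    integral_congr fun s hs => by
      rw [uIcc_of_le hT] at hs
      linarith [hE s hs]
  have hG0 : 0 ≤ G := by linarith [hG 0 ⟨le_rfl, hT⟩]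
  have hkinG : ∫ s in 0..t₀ / ε, η' s ^ 2 ≤ G := by
    have := integral_sq_le_mul_sub hT hd hη' hG
    rw [hη₀] at this
    nlinarith [hend.1]
  have hdist : |η (t₀ / ε) - x₀ / ε| ≤ 1 := abs_le.mpr ⟨by linarith [hend.1], by linarith [hend.2]⟩
  have hu := abs_le.mp (abs_sub_le_of_abs_sub_div_le_one hε hLu hdist)
  unfold actionEps
  rw [hkin]
  linarith [mul_le_mul_of_nonneg_left hkinG hε.le]

end Action

structure IsPeriodicWell (P : ℝ → ℝ) (y₀ B C : ℝ) : Prop where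
  continuous : Continuous P
  nonpos : ∀ y, P y ≤ 0
  neg_le : ∀ y, -P y ≤ B
  add_int : ∀ n : ℤ, P (y₀ + n) = 0
  neg_le_mul_sq : ∀ z, P z = 0 → ∀ y, -P y ≤ C * (y - z) ^ 2

theorem isPeriodicWell_mul {a b : ℝ → ℝ} {M K B y₀ : ℝ} (ε : ℝ) (ha : Continuous a)
    (haPos : ∀ x, 0 < a x) (haM : ∀ x, a x ≤ M) (hb : Continuous b)
    (hbPer : Function.Periodic b 1) (hbNonpos : ∀ y, b y ≤ 0) (hy₀ : b y₀ = 0)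
    (hK : ∀ z y, deriv b z = 0 → |b y - b z| ≤ K * (y - z) ^ 2)
    (hB : ∀ x y, -(a x * b y) ≤ B) :
    IsPeriodicWell (fun y => a (ε * y) * b y) y₀ B (M * K) where
  continuous := by fun_prop
  nonpos y := mul_nonpos_of_nonneg_of_nonpos (haPos _).le (hbNonpos y)
  neg_le y := hB _ _
  add_int n := by
    rw [show b (y₀ + n) = 0 by simpa [hy₀] using hbPer.int_mul n y₀, mul_zero]
  neg_le_mul_sq z hz y := by
    have hbz : b z = 0 := (mul_eq_zero.mp hz).resolve_left (haPos _).ne'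
    have hmax : IsLocalMax b z := Filter.Eventually.of_forall fun y => hbz ▸ hbNonpos y
    have hquad := hK z y hmax.deriv_eq_zero
    rw [hbz, sub_zero, abs_of_nonpos (hbNonpos y)] at hquad
    nlinarith [haPos (ε * y), haM (ε * y), hbNonpos y]

namespace IsPeriodicWell

variable {P : ℝ → ℝ} {y₀ B C : ℝ}

theorem exists_zero_le_le (hP : IsPeriodicWell P y₀ B C) (X : ℝ) :
    ∃ z, P z = 0 ∧ P (z + 1) = 0 ∧ X ∈ Icc z (z + 1) := by
  refine ⟨y₀ + ⌊X - y₀⌋, hP.add_int _, ?_, ?_, ?_⟩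
  · simpa [add_assoc] using hP.add_int (⌊X - y₀⌋ + 1)
  · linarith [Int.floor_le (X - y₀)]
  · linarith [Int.lt_floor_add_one (X - y₀)]

theorem exists_descent (hP : IsPeriodicWell P y₀ B C) (X : ℝ) :
    ∃ η : ℝ → ℝ, η 0 = X ∧
      ∀ s, 0 ≤ s → η s ∈ Icc (X - 1) X ∧ HasDerivAt η (-√(-(2 * P (η s)))) s := by
  by_cases hPX : P X = 0
  · refine ⟨fun _ => X, rfl, fun s _ => ⟨⟨by linarith, le_rfl⟩, ?_⟩⟩
    simpa [hPX] using hasDerivAt_const s X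
  obtain ⟨z₀, hz₀, hz₀1, hXz₀⟩ := hP.exists_zero_le_le X
  obtain ⟨z, w, hz₀z, hX, hz, hne⟩ :=
    exists_Ioo_forall_ne_zero hP.continuous hz₀ hz₀1 hXz₀ hPX
  have hpos : ∀ y ∈ Ioo z w, 0 < √(-(2 * P y)) := fun y hy =>
    sqrt_pos.mpr (by linarith [(hP.nonpos y).lt_of_ne (hne y hy)])
  have hlin : ∀ y ∈ Ioc z X, √(-(2 * P y)) ≤ √(2 * C) * (y - z) := fun y hy =>
    calc √(-(2 * P y)) ≤ √(2 * C * (y - z) ^ 2) :=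
          sqrt_le_sqrt (by linarith [hP.neg_le_mul_sq z hz y])
      _ = √(2 * C) * (y - z) := by
          rw [sqrt_mul' _ (sq_nonneg _), sqrt_sq (sub_nonneg.mpr hy.1.le)]
  obtain ⟨η, hη₀, hη⟩ :=
    exists_hasDerivAt_eq_neg_comp (hP.continuous.const_mul 2).neg.sqrt hpos hlin hX
  exact ⟨η, hη₀, fun s hs =>
    ⟨⟨by linarith [(hη s hs).1.1, hXz₀.2], (hη s hs).1.2⟩, (hη s hs).2⟩⟩

end IsPeriodicWell

def nonposEnergyActions (V : ℝ → ℝ → ℝ) (u₀ : ℝ → ℝ) (ε x₀ t₀ : ℝ) : Set ℝ :=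
  {A | ∃ η η' : ℝ → ℝ, (∀ s ∈ Icc 0 (t₀ / ε), HasDerivAt η (η' s) s) ∧ η 0 = x₀ / ε ∧
    (∃ r : ℝ, r ≤ 0 ∧ ∀ s ∈ Icc 0 (t₀ / ε), η' s ^ 2 / 2 + V (ε * η s) (η s) = r) ∧
    A = actionEps V u₀ ε t₀ η η'}

namespace IsPeriodicWell

variable {V : ℝ → ℝ → ℝ} {u₀ : ℝ → ℝ} {y₀ B C Lu ε t₀ x₀ : ℝ}

theorem sub_le_of_mem_nonposEnergyActions (hP : IsPeriodicWell (fun y => V (ε * y) y) y₀ B C)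
    (hε : 0 < ε) (ht₀ : 0 < t₀) (hLu : ∀ x y, |u₀ x - u₀ y| ≤ Lu * |x - y|) {A : ℝ}
    (hA : A ∈ nonposEnergyActions V u₀ ε x₀ t₀) : u₀ x₀ - Lu * ε ≤ A := by
  obtain ⟨η, η', hd, hη₀, ⟨r, hr, hE⟩, rfl⟩ := hA
  obtain ⟨z, hz, hz1, hXz⟩ := hP.exists_zero_le_le (x₀ / ε)
  have hT := mem_Icc_of_energy (div_pos ht₀ hε).le hd hE hr hP.neg_le_mul_sq hz hz1 (hη₀ ▸ hXz)
  exact sub_le_actionEps hε ht₀ hLu hE hr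
    (abs_le.mpr ⟨by linarith [hT.1, hXz.2], by linarith [hT.2, hXz.1]⟩)

theorem exists_mem_nonposEnergyActions_le (hP : IsPeriodicWell (fun y => V (ε * y) y) y₀ B C)
    (hε : 0 < ε) (ht₀ : 0 < t₀) (hLu : ∀ x y, |u₀ x - u₀ y| ≤ Lu * |x - y|) :
    ∃ A ∈ nonposEnergyActions V u₀ ε x₀ t₀, A ≤ u₀ x₀ + (√(2 * B) + Lu) * ε := by
  obtain ⟨η, hη₀, hη⟩ := hP.exists_descent (x₀ / ε)
  set η' : ℝ → ℝ := fun s => -√(-(2 * V (ε * η s) (η s)))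
  have hd : ∀ s ∈ Icc 0 (t₀ / ε), HasDerivAt η (η' s) s := fun s hs => (hη s hs.1).2
  have hE : ∀ s, η' s ^ 2 / 2 + V (ε * η s) (η s) = 0 := fun s => by
    have := hP.nonpos (η s)
    simp only [η', neg_sq, sq_sqrt (by linarith : 0 ≤ -(2 * V (ε * η s) (η s)))]
    ring
  have hG : ∀ s, -√(2 * B) ≤ η' s ∧ η' s ≤ 0 := fun s =>
    ⟨neg_le_neg (sqrt_le_sqrt (by linarith [hP.neg_le (η s)])), neg_nonpos.mpr (sqrt_nonneg _)⟩
  have hη' : ContinuousOn η' (Icc 0 (t₀ / ε)) :=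
    ((hP.continuous.const_mul 2).neg.sqrt.comp_continuousOn
      fun s hs => (hd s hs).continuousAt.continuousWithinAt).neg
  exact ⟨_, ⟨η, η', hd, hη₀, ⟨0, le_rfl, fun s _ => hE s⟩, rfl⟩,
    actionEps_le hε ht₀ hLu hd hη' (fun s _ => hG s) (fun s _ => hE s) hη₀
      (hη _ (div_pos ht₀ hε).le).1⟩

end IsPeriodicWell

theorem abs_csInf_sub_le {S : Set ℝ} {c δ : ℝ} (hlow : ∀ A ∈ S, c - δ ≤ A)
    (hup : ∃ A ∈ S, A ≤ c + δ) : |sInf S - c| ≤ δ := by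
  obtain ⟨A, hA, hAc⟩ := hup
  rw [abs_le]
  constructor
  · linarith [le_csInf ⟨A, hA⟩ hlow]
  · linarith [csInf_le ⟨c - δ, hlow⟩ hA]

theorem nonpositive_energy_estimate_general
    (a b : ℝ → ℝ)
    (ha : ContDiff ℝ 1 a) (haBd : ∃ M : ℝ, ∀ x, |a x| ≤ M)
    (haPos : ∀ x, 0 < a x)
    (hb : ContDiff ℝ 2 b) (hbPer : Function.Periodic b 1)
    (hbNonpos : ∀ y, b y ≤ 0) (hbMax : ∃ y₀, b y₀ = 0)
    (u₀ : ℝ → ℝ)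
    (Lu : ℝ) (hLu : ∀ x y, |u₀ x - u₀ y| ≤ Lu * |x - y|)
    (Vn : ℝ) (hVn : Vn = ⨆ q : ℝ × ℝ, |a q.1 * b q.2|)
    (ε x₀ t₀ : ℝ) (hε : ε ∈ Set.Ioo (0 : ℝ) 1) (ht₀ : 0 < t₀) :
    |sInf {A : ℝ | ∃ η η' : ℝ → ℝ,
        (∀ s ∈ Set.Icc (0 : ℝ) (t₀ / ε), HasDerivAt η (η' s) s) ∧
        η 0 = x₀ / ε ∧
        (∃ r : ℝ, r ≤ 0 ∧ ∀ s ∈ Set.Icc (0 : ℝ) (t₀ / ε),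
          (η' s) ^ 2 / 2 + a (ε * η s) * b (η s) = r) ∧
        A = actionEps (fun x y => a x * b y) u₀ ε t₀ η η'}
      - u₀ x₀| ≤ (Real.sqrt (2 * Vn) + Lu) * ε := by
  obtain ⟨y₀, hy₀⟩ := hbMax
  obtain ⟨M, hM⟩ := haBd
  obtain ⟨B, hB⟩ := (hbPer.isBounded_of_continuous one_ne_zero hb.continuous).exists_norm_le
  obtain ⟨K, hK⟩ := exists_abs_sub_le_mul_sq_of_periodic hb hbPer one_ne_zero
  have hP : IsPeriodicWell (fun y => a (ε * y) * b y) y₀ Vn (M * K) :=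
    isPeriodicWell_mul ε ha.continuous haPos (fun x => (le_abs_self _).trans (hM x))
      hb.continuous hbPer hbNonpos hy₀ hK
      (hVn ▸ neg_mul_le_iSup_abs_mul hM fun y => hB _ (mem_range_self y))
  change |sInf (nonposEnergyActions (fun x y => a x * b y) u₀ ε x₀ t₀) - u₀ x₀| ≤ _
  refine abs_csInf_sub_le (fun A hA => ?_) (hP.exists_mem_nonposEnergyActions_le hε.1 ht₀ hLu)
  linarith [hP.sub_le_of_mem_nonposEnergyActions hε.1 ht₀ hLu hA,
    mul_nonneg (sqrt_nonneg (2 * Vn)) hε.1.le]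

/-- Estimate for the infimum of the action over Euler–Lagrange trajectories of
nonpositive energy: it differs from `u₀(x₀)` by at most
`(√(2‖V‖_∞) + Lip(u₀))·ε`. -/
theorem nonpositive_energy_estimate
    (a b : ℝ → ℝ)
    (ha : ContDiff ℝ 1 a) (haBd : ∃ M : ℝ, ∀ x, |a x| ≤ M)
    (haPos : ∀ x, 0 < a x)
    (hb : ContDiff ℝ 2 b) (hbPer : Function.Periodic b 1)
    (hbNonpos : ∀ y, b y ≤ 0) (hbMax : ∃ y₀, b y₀ = 0)
    (u₀ : ℝ → ℝ) (hu₀Bd : ∃ M : ℝ, ∀ x, |u₀ x| ≤ M)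
    (Lu : ℝ) (hLu : ∀ x y, |u₀ x - u₀ y| ≤ Lu * |x - y|)
    (Vn : ℝ) (hVn : Vn = ⨆ q : ℝ × ℝ, |a q.1 * b q.2|)
    (ε x₀ t₀ : ℝ) (hε : ε ∈ Set.Ioo (0 : ℝ) 1) (ht₀ : 0 < t₀) :
    |sInf {A : ℝ | ∃ η η' : ℝ → ℝ,
        (∀ s ∈ Set.Icc (0 : ℝ) (t₀ / ε), HasDerivAt η (η' s) s) ∧
        η 0 = x₀ / ε ∧
        (∃ r : ℝ, r ≤ 0 ∧ ∀ s ∈ Set.Icc (0 : ℝ) (t₀ / ε),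
          (η' s) ^ 2 / 2 + a (ε * η s) * b (η s) = r) ∧
        A = actionEps (fun x y => a x * b y) u₀ ε t₀ η η'}
      - u₀ x₀| ≤ (Real.sqrt (2 * Vn) + Lu) * ε :=
  nonpositive_energy_estimate_general a b ha haBd haPos hb hbPer hbNonpos hbMax u₀ Lu hLu Vn hVn ε
    x₀ t₀ hε ht₀
end

section
/- Assume the setting of the separable potential with R, T, r₀ fixed. Fix (x₀, t₀) ∈ [−R,R] × (0,T], ε ∈ (0,1), and 0 < r < r₀. Let η : [0, t₀/ε] → ℝ be differentiable with η(0) = x₀/ε and η′(s) = √(2(r − V(εη(s), η(s)))) for all s ∈ (0, t₀/ε), and let c_{1,r} be the unique number ≥ x₀ with ∫_{x₀}^{c_{1,r}} ∫₀¹ dy dx / √(2(r − V(x,y))) = t₀. Then |ε·η(t₀/ε) − c_{1,r}| ≤ C_K·ε, where C_K = √(β_T/α_T)·( 2 + (c₀/2)·max_{x∈I₀} |a′(x)/a(x)| ). -/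
/-!
Write `F(x, y) = (2(r - a(x) b(y)))^{-1/2}` and `G(x) = ∫₀¹ F(x, y) dy`. Along the trajectory
`d(εη)/dt = 1 / F(εη, η)`, so the endpoint `X = εη(t₀/ε)` satisfies `∫_{x₀}^X F(x, x/ε) dx = t₀`,
while `∫_{x₀}^{c₁} G = t₀`. Hence `∫_X^{c₁} G = ∫_{x₀}^X (F(x, x/ε) - G(x)) dx`; the left side is at
least `|X - c₁| min G`. The right side is an oscillatory integral of size `O(ε)`: freezing the
slow variable at `x₀` costs `ε ∫₀¹ F(x₀, ·)`, and after exchanging the order of integration the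
variation in the slow variable costs `ε (X - x₀) sup ∫₀¹ |∂ₓF|`, where `|∂ₓF| ≤ |a'/a| F / 2`.
Comparing `G` at two points of `I₀` loses the factor `√(β_T / α_T)`.
-/

open intervalIntegral MeasureTheory Set Function

theorem Function.Periodic.abs_intervalIntegral_sub_mul_le {g : ℝ → ℝ} (hg : Periodic g 1)
    (hc : Continuous g) (s t : ℝ) :
    |(∫ x in s..t, g x) - (t - s) * ∫ x in 0..1, g x| ≤ ∫ x in 0..1, |g x| := by
  have hint : ∀ p q : ℝ, IntervalIntegrable g volume p q := hc.intervalIntegrable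
  have hint' : ∀ p q : ℝ, IntervalIntegrable (|g ·|) volume p q := hc.abs.intervalIntegrable
  -- `s'` is the last point of `s + ℤ` before `t`
  set n : ℤ := ⌊t - s⌋
  set s' : ℝ := s + n with hs'
  have hs't : s' ≤ t := by linarith [Int.floor_le (t - s)]
  have hts' : t ≤ s' + 1 := by linarith [Int.lt_floor_add_one (t - s)]
  set P := ∫ x in s'..t, g x
  set Q := ∫ x in t..s' + 1, g x
  have hfull : ∫ x in s..s', g x = n * (P + Q) := by
    rw [integral_add_adjacent_intervals (hint _ _) (hint _ _), hg.intervalIntegral_add_eq s' s]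
    simpa using hg.intervalIntegral_add_zsmul_eq n s hint
  have hPQ : P + Q = ∫ x in 0..1, g x := by
    rw [integral_add_adjacent_intervals (hint _ _) (hint _ _)]
    simpa using hg.intervalIntegral_add_eq s' 0
  have hPQ' : (∫ x in s'..t, |g x|) + ∫ x in t..s' + 1, |g x| = ∫ x in 0..1, |g x| := by
    rw [integral_add_adjacent_intervals (hint' _ _) (hint' _ _)]
    simpa using (hg.comp (|·|)).intervalIntegral_add_eq s' 0
  have hρ : 0 ≤ t - s' ∧ 0 ≤ s' + 1 - t := ⟨by linarith, by linarith⟩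
  calc |(∫ x in s..t, g x) - (t - s) * ∫ x in 0..1, g x|
      = |(s' + 1 - t) * P - (t - s') * Q| := by
        rw [← integral_add_adjacent_intervals (hint s s') (hint s' t), hfull, ← hPQ]
        change |n * (P + Q) + P - (t - s) * (P + Q)| = _
        rw [hs']
        ring_nf
    _ ≤ (s' + 1 - t) * |P| + (t - s') * |Q| := by
        refine (abs_sub _ _).trans_eq ?_
        rw [abs_mul, abs_mul, abs_of_nonneg hρ.1, abs_of_nonneg hρ.2]
    _ ≤ |P| + |Q| := by nlinarith [abs_nonneg P, abs_nonneg Q]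
    _ ≤ ∫ x in 0..1, |g x| := hPQ' ▸ add_le_add (abs_integral_le_integral_abs hs't)
        (abs_integral_le_integral_abs hts')

theorem Function.Periodic.abs_intervalIntegral_comp_div_sub_average_le {g : ℝ → ℝ}
    (hg : Periodic g 1) (hc : Continuous g) {ε : ℝ} (hε : 0 < ε) (s t : ℝ) :
    |∫ x in s..t, (g (x / ε) - ∫ y in 0..1, g y)| ≤ ε * ∫ y in 0..1, |g y| := by
  have h := hg.abs_intervalIntegral_sub_mul_le hc (s / ε) (t / ε)
  have hi : IntervalIntegrable (fun x => g (x / ε)) volume s t :=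
    (hc.comp (continuous_id.div_const ε)).intervalIntegrable _ _
  rw [integral_sub hi intervalIntegrable_const, integral_comp_div _ hε.ne',
    intervalIntegral.integral_const, smul_eq_mul, smul_eq_mul]
  calc _ = ε * |(∫ x in s / ε..t / ε, g x) - (t / ε - s / ε) * ∫ y in 0..1, g y| := by
        rw [← abs_of_pos hε, ← abs_mul, abs_of_pos hε]
        congr 1
        field_simp
    _ ≤ _ := by gcongr

theorem intervalIntegral_integral_swap_triangle {g : ℝ → ℝ → ℝ} (hg : Continuous (uncurry g))
    {a b : ℝ} (hab : a ≤ b) :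
    ∫ x in a..b, ∫ u in a..x, g u x = ∫ u in a..b, ∫ x in u..b, g u x := by
  set μ := volume.restrict (Ioc a b)
  set k : ℝ × ℝ → ℝ := {p | p.2 ≤ p.1}.indicator fun p => g p.2 p.1
  have hk : Integrable k (μ.prod μ) := by
    refine Integrable.indicator ?_ (measurableSet_le measurable_snd measurable_fst)
    rw [Measure.prod_restrict, ← Measure.volume_eq_prod]
    exact ((hg.comp continuous_swap).continuousOn.integrableOn_compact
      (isCompact_Icc.prod isCompact_Icc)).mono_set
      (prod_mono Ioc_subset_Icc_self Ioc_subset_Icc_self)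
  have hL : ∀ x ∈ Ioc a b, ∫ u, k (x, u) ∂μ = ∫ u in a..x, g u x := by
    intro x hx
    have : (fun u => k (x, u)) = (Iic x).indicator (g · x) := by
      ext u; simp [k, indicator_apply]
    rw [this, MeasureTheory.integral_indicator measurableSet_Iic, Measure.restrict_restrict
      measurableSet_Iic, Iic_inter_Ioc_of_le hx.2, integral_of_le hx.1.le]
  have hR : ∀ u ∈ Ioc a b, ∫ x, k (x, u) ∂μ = ∫ x in u..b, g u x := by
    intro u hu
    have : (fun x => k (x, u)) = (Ici u).indicator (g u ·) := by
      ext x; simp [k, indicator_apply]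
    have hIcc : Ici u ∩ Ioc a b = Icc u b := by
      ext x
      exact ⟨fun h => ⟨h.1, h.2.2⟩, fun h => ⟨h.1, hu.1.trans_le h.1, h.2⟩⟩
    rw [this, MeasureTheory.integral_indicator measurableSet_Ici, Measure.restrict_restrict
      measurableSet_Ici, hIcc, integral_Icc_eq_integral_Ioc,
      integral_of_le hu.2]
  rw [integral_of_le hab, integral_of_le hab, ← setIntegral_congr_fun measurableSet_Ioc hL,
    ← setIntegral_congr_fun measurableSet_Ioc hR]
  exact integral_integral_swap (f := fun x u => k (x, u)) hk

theorem hasDerivAt_intervalIntegral_of_continuous {f f' : ℝ → ℝ → ℝ}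
    (hf : Continuous (uncurry f)) (hf' : Continuous (uncurry f'))
    (hderiv : ∀ x y, HasDerivAt (f · y) (f' x y) x) (a b x : ℝ) :
    HasDerivAt (fun x => ∫ y in a..b, f x y) (∫ y in a..b, f' x y) x := by
  obtain ⟨C, hC⟩ := ((isCompact_closedBall x 1).prod (isCompact_uIcc (a := a) (b := b)))
    |>.exists_bound_of_continuousOn hf'.continuousOn
  refine (hasDerivAt_integral_of_dominated_loc_of_deriv_le (bound := fun _ => C)
    (Metric.closedBall_mem_nhds x one_pos) ?_ ?_ ?_ ?_ intervalIntegrable_const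
    (ae_of_all _ fun y _ x _ => hderiv x y)).2
  · exact Filter.Eventually.of_forall fun x' => (hf.uncurry_left x').aestronglyMeasurable
  · exact (hf.uncurry_left x).intervalIntegrable _ _
  · exact (hf'.uncurry_left x).aestronglyMeasurable
  · exact ae_of_all _ fun y hy x' hx' => hC (x', y) ⟨hx', uIoc_subset_uIcc hy⟩

theorem abs_intervalIntegral_two_scale_sub_average_le {f f' : ℝ → ℝ → ℝ}
    (hf : Continuous (uncurry f)) (hf' : Continuous (uncurry f'))
    (hderiv : ∀ x y, HasDerivAt (f · y) (f' x y) x) (hper : ∀ x, Periodic (f x) 1)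
    {ε s t A B : ℝ} (hε : 0 < ε) (hst : s ≤ t)
    (hA : ∫ y in 0..1, |f s y| ≤ A) (hB : ∀ u ∈ Icc s t, ∫ y in 0..1, |f' u y| ≤ B) :
    |∫ x in s..t, (f x (x / ε) - ∫ y in 0..1, f x y)| ≤ ε * (A + (t - s) * B) := by
  set avg : ℝ → ℝ := fun x => ∫ y in 0..1, f x y
  set avg' : ℝ → ℝ := fun x => ∫ y in 0..1, f' x y
  have hper' : ∀ x, Periodic (f' x) 1 := fun x y =>
    (hderiv x (y + 1)).unique (by simpa only [hper _ y] using hderiv x y)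
  have hfε : Continuous (uncurry fun u x => f u (x / ε)) :=
    hf.comp (continuous_fst.prodMk (continuous_snd.div_const ε))
  have hk : Continuous (uncurry fun u x => f' u (x / ε) - avg' u) :=
    (hf'.comp (continuous_fst.prodMk (continuous_snd.div_const ε))).sub
      ((continuous_parametric_intervalIntegral_of_continuous' hf' 0 1).comp continuous_fst)
  have hpoint : ∀ x, f x (x / ε) - avg x
      = (f s (x / ε) - avg s) + ∫ u in s..x, (f' u (x / ε) - avg' u) := fun x => by
    rw [integral_eq_sub_of_hasDerivAt
      (fun u _ => (hderiv u (x / ε)).sub (hasDerivAt_intervalIntegral_of_continuous hf hf'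
        hderiv 0 1 u)) ((hk.uncurry_right x).intervalIntegrable _ _)]
    simp only [Pi.sub_apply, avg]
    ring
  -- after the swap, each inner integral is again a purely oscillatory one
  have hsplit : ∫ x in s..t, (f x (x / ε) - avg x) = (∫ x in s..t, (f s (x / ε) - avg s))
      + ∫ u in s..t, ∫ x in u..t, (f' u (x / ε) - avg' u) := by
    have hk' : Continuous (uncurry fun x u => f' u (x / ε) - avg' u) := hk.comp continuous_swap
    have h₁ : IntervalIntegrable (fun x => f s (x / ε) - avg s) volume s t :=
      ((hfε.uncurry_left s).sub continuous_const).intervalIntegrable _ _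
    have h₂ : IntervalIntegrable (fun x => ∫ u in s..x, (f' u (x / ε) - avg' u)) volume s t :=
      (continuous_parametric_intervalIntegral_of_continuous hk' continuous_id).intervalIntegrable
        _ _
    simp_rw [hpoint]
    rw [intervalIntegral.integral_add h₁ h₂, intervalIntegral_integral_swap_triangle hk hst]
  have hinner : ∀ u ∈ uIoc s t, ‖∫ x in u..t, (f' u (x / ε) - avg' u)‖ ≤ ε * B := fun u hu =>
    ((hper' u).abs_intervalIntegral_comp_div_sub_average_le (hf'.uncurry_left u) hε u t).trans
      (by gcongr; exact hB u (Ioc_subset_Icc_self (uIoc_of_le hst ▸ hu)))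
  change |∫ x in s..t, (f x (x / ε) - avg x)| ≤ _
  rw [hsplit]
  calc _ ≤ ε * A + ε * B * |t - s| := abs_add_le _ _ |>.trans (add_le_add
        (((hper s).abs_intervalIntegral_comp_div_sub_average_le (hf.uncurry_left s) hε s t).trans
          (by gcongr)) (norm_integral_le_of_norm_le_const hinner))
    _ = ε * (A + (t - s) * B) := by rw [abs_of_nonneg (sub_nonneg.2 hst)]; ring

theorem intervalIntegral_comp_div_eq_of_hasDerivAt {F : ℝ → ℝ → ℝ} (hF : Continuous (uncurry F))
    (hF0 : ∀ x y, F x y ≠ 0) {η : ℝ → ℝ} {ε τ : ℝ} (hε : 0 < ε) (hτ : 0 ≤ τ)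
    (hη : ∀ s ∈ Icc 0 τ, HasDerivAt η (F (ε * η s) (η s))⁻¹ s) :
    ∫ x in ε * η 0..ε * η τ, F x (x / ε) = ε * τ := by
  have hFη : Continuous fun u => F (ε * u) u :=
    hF.comp ((continuous_const.mul continuous_id).prodMk continuous_id)
  -- `s ↦ ∫ u in η 0..η s, F (ε u) u` is the time `s` itself
  have htime : ∫ u in η 0..η τ, F (ε * u) u = τ := by
    have hderiv : ∀ s ∈ uIcc 0 τ, HasDerivAt (fun s => ∫ u in η 0..η s, F (ε * u) u) 1 s := by
      intro s hs
      have := (hFη.integral_hasStrictDerivAt (η 0) (η s)).hasDerivAt.comp s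
        (hη s (uIcc_of_le hτ ▸ hs))
      rwa [mul_inv_cancel₀ (hF0 _ _)] at this
    simpa using (integral_eq_sub_of_hasDerivAt hderiv intervalIntegrable_const).symm
  have := integral_comp_mul_left (fun x => F x (x / ε)) hε.ne' (a := η 0) (b := η τ)
  simp only [mul_div_cancel_left₀ _ hε.ne', htime, smul_eq_mul] at this
  rw [← inv_mul_eq_iff_eq_mul₀ hε.ne']
  exact this.symm

theorem le_and_sub_le_of_intervalIntegral_eq {g : ℝ → ℝ} (hg : Continuous g) {m a z t : ℝ}
    (hm : 0 < m) (hgm : ∀ x, m ≤ g x) (ht : 0 < t) (h : ∫ x in a..z, g x = t) :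
    a ≤ z ∧ z - a ≤ t / m := by
  have hmono : ∀ {p q : ℝ}, p ≤ q → m * (q - p) ≤ ∫ x in p..q, g x := fun hpq => by
    simpa [mul_comm] using integral_mono_on hpq intervalIntegrable_const
      (hg.intervalIntegrable (μ := volume) _ _) fun x _ => hgm x
  rcases le_or_gt a z with haz | hza
  · exact ⟨haz, (le_div_iff₀' hm).2 (h ▸ hmono haz)⟩
  · have := hmono hza.le
    rw [integral_symm, h] at this
    nlinarith

theorem mul_abs_sub_le_abs_intervalIntegral {g : ℝ → ℝ} (hg : Continuous g) {m a b : ℝ}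
    (hgm : ∀ x ∈ uIcc a b, m ≤ g x) : m * |b - a| ≤ |∫ x in a..b, g x| := by
  wlog hab : a ≤ b generalizing a b
  · rw [abs_sub_comm, integral_symm, abs_neg]
    exact this (uIcc_comm a b ▸ hgm) (le_of_not_ge hab)
  have := integral_mono_on hab intervalIntegrable_const (hg.intervalIntegrable (μ := volume) _ _)
    fun x hx => hgm x (Icc_subset_uIcc hx)
  rw [intervalIntegral.integral_const, smul_eq_mul] at this
  rw [abs_of_nonneg (sub_nonneg.2 hab), mul_comm]
  exact this.trans (le_abs_self _)

theorem abs_mul_le_iSup_abs_mul {a b : ℝ → ℝ} (ha : ∃ M, ∀ x, |a x| ≤ M)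
    (hb : ∃ M, ∀ y, |b y| ≤ M) (x y : ℝ) : |a x * b y| ≤ ⨆ q : ℝ × ℝ, |a q.1 * b q.2| := by
  obtain ⟨Ma, hMa⟩ := ha
  obtain ⟨Mb, hMb⟩ := hb
  refine le_ciSup (f := fun q : ℝ × ℝ => |a q.1 * b q.2|) ⟨Ma * Mb, ?_⟩ (x, y)
  rintro _ ⟨q, rfl⟩
  show |a q.1 * b q.2| ≤ _
  rw [abs_mul]
  exact mul_le_mul (hMa _) (hMb _) (abs_nonneg _) ((abs_nonneg _).trans (hMa 0))

noncomputable def invSpeed (a b : ℝ → ℝ) (r x y : ℝ) : ℝ := (√(2 * (r - a x * b y)))⁻¹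

theorem periodic_invSpeed {a b : ℝ → ℝ} (hbp : Periodic b 1) (r x : ℝ) :
    Periodic (invSpeed a b r x) 1 := fun y => by
  simp only [invSpeed, hbp y]

section InvSpeed

variable {a b : ℝ → ℝ} {r : ℝ} (ha : ∀ x, 0 < a x) (hb : ∀ y, b y ≤ 0) (hr : 0 < r)
include ha hb hr

theorem two_mul_sub_mul_pos (x y : ℝ) : 0 < 2 * (r - a x * b y) := by
  nlinarith [mul_nonpos_of_nonneg_of_nonpos (ha x).le (hb y)]

theorem invSpeed_pos (x y : ℝ) : 0 < invSpeed a b r x y :=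
  inv_pos.2 (Real.sqrt_pos.2 (two_mul_sub_mul_pos ha hb hr x y))

theorem continuous_invSpeed (hac : Continuous a) (hbc : Continuous b) :
    Continuous (uncurry (invSpeed a b r)) :=
  (by fun_prop : Continuous fun p : ℝ × ℝ => √(2 * (r - a p.1 * b p.2))).inv₀ fun p =>
    (Real.sqrt_pos.2 (two_mul_sub_mul_pos ha hb hr p.1 p.2)).ne'

theorem hasDerivAt_invSpeed (had : Differentiable ℝ a) (x y : ℝ) :
    HasDerivAt (invSpeed a b r · y) (deriv a x * b y * invSpeed a b r x y ^ 3) x := by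
  have hpos := two_mul_sub_mul_pos ha hb hr x y
  have hsqrt := ((((had x).hasDerivAt.mul_const (b y)).const_sub r).const_mul 2).sqrt hpos.ne'
  refine (hsqrt.inv (Real.sqrt_pos.2 hpos).ne').congr_deriv ?_
  rw [invSpeed]
  field_simp

theorem abs_deriv_mul_invSpeed_pow_le (x y : ℝ) :
    |deriv a x * b y * invSpeed a b r x y ^ 3| ≤ |deriv a x / a x| / 2 * invSpeed a b r x y := by
  have hpos := two_mul_sub_mul_pos ha hb hr x y
  have hF := invSpeed_pos ha hb hr x y
  have hF2 : invSpeed a b r x y ^ 2 * (2 * (r - a x * b y)) = 1 := by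
    rw [invSpeed, inv_pow, Real.sq_sqrt hpos.le, inv_mul_cancel₀ hpos.ne']
  have hab : 0 ≤ -(a x * b y) := by nlinarith [mul_nonpos_of_nonneg_of_nonpos (ha x).le (hb y)]
  have key : |deriv a x * b y * invSpeed a b r x y ^ 3|
      = |deriv a x / a x| * (-(a x * b y) * invSpeed a b r x y ^ 2) * invSpeed a b r x y := by
    rw [abs_mul, abs_mul, abs_div, abs_of_pos (ha x), abs_of_nonpos (hb y),
      abs_of_pos (pow_pos hF 3)]
    field_simp [(ha x).ne']
  have half : -(a x * b y) * invSpeed a b r x y ^ 2 ≤ 1 / 2 := by nlinarith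
  rw [key, div_eq_mul_one_div _ (2 : ℝ)]
  gcongr

theorem invSpeed_le_sqrt_div_mul_invSpeed {α β : ℝ} (hα : 0 < α) {x w : ℝ} (hx : a x ∈ Icc α β)
    (hw : a w ≤ β) (y : ℝ) : invSpeed a b r x y ≤ √(β / α) * invSpeed a b r w y := by
  have hβα : 0 < β / α := div_pos (hα.trans_le (hx.1.trans hx.2)) hα
  have hcomp : √(2 * (r - a w * b y)) ≤ √(β / α) * √(2 * (r - a x * b y)) := by
    rw [← Real.sqrt_mul hβα.le]
    refine Real.sqrt_le_sqrt ?_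
    rw [div_mul_eq_mul_div, le_div_iff₀ hα]
    nlinarith [mul_le_mul_of_nonneg_right (mul_le_mul hx.1 hw (ha w).le (hα.le.trans hx.1))
      (neg_nonneg.2 (hb y)), mul_le_mul_of_nonneg_right (hx.1.trans hx.2) hr.le]
  calc invSpeed a b r x y = √(β / α) * (√(β / α) * √(2 * (r - a x * b y)))⁻¹ := by
        rw [invSpeed]; field_simp
    _ ≤ √(β / α) * invSpeed a b r w y := by
        rw [invSpeed]
        gcongr
        exact Real.sqrt_pos.2 (two_mul_sub_mul_pos ha hb hr w y)

theorem inv_sqrt_le_invSpeed {V x y : ℝ} (hV : |a x * b y| ≤ V) :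
    (√(2 * (r + V)))⁻¹ ≤ invSpeed a b r x y :=
  inv_anti₀ (Real.sqrt_pos.2 (two_mul_sub_mul_pos ha hb hr x y))
    (Real.sqrt_le_sqrt (by linarith [neg_abs_le (a x * b y)]))

theorem abs_intervalIntegral_invSpeed_sub_average_le (hac : ContDiff ℝ 1 a) (hbc : Continuous b)
    (hbp : Periodic b 1) {ε s t S M : ℝ} (hε : 0 < ε) (hst : s ≤ t)
    (hS : ∀ u ∈ Icc s t, |deriv a u / a u| ≤ S)
    (hM : ∀ u ∈ Icc s t, ∫ y in 0..1, invSpeed a b r u y ≤ M) :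
    |∫ x in s..t, (invSpeed a b r x (x / ε) - ∫ y in 0..1, invSpeed a b r x y)|
      ≤ ε * M * (1 + (t - s) / 2 * S) := by
  set F := invSpeed a b r
  have hF : Continuous (uncurry F) := continuous_invSpeed ha hb hr hac.continuous hbc
  have hF' : Continuous (uncurry fun x y => deriv a x * b y * F x y ^ 3) :=
    (((hac.continuous_deriv le_rfl).comp continuous_fst).mul (hbc.comp continuous_snd)).mul
      (hF.pow 3)
  have hs : s ∈ Icc s t := left_mem_Icc.2 hst
  have hS0 : 0 ≤ S := (abs_nonneg _).trans (hS s hs)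
  have hA : ∫ y in 0..1, |F s y| ≤ M :=
    (integral_congr fun y _ => abs_of_pos (invSpeed_pos ha hb hr s y)).trans_le (hM s hs)
  have hB : ∀ u ∈ Icc s t, ∫ y in 0..1, |deriv a u * b y * F u y ^ 3| ≤ S / 2 * M := by
    intro u hu
    have hpt : ∀ y, |deriv a u * b y * F u y ^ 3| ≤ S / 2 * F u y := fun y =>
      (abs_deriv_mul_invSpeed_pow_le ha hb hr u y).trans (mul_le_mul_of_nonneg_right
        (by linarith [hS u hu]) (invSpeed_pos ha hb hr u y).le)
    calc ∫ y in 0..1, |deriv a u * b y * F u y ^ 3|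
        ≤ ∫ y in 0..1, S / 2 * F u y := integral_mono zero_le_one
          ((hF'.uncurry_left u).abs.intervalIntegrable _ _)
          ((continuous_const.mul (hF.uncurry_left u)).intervalIntegrable _ _) hpt
      _ = S / 2 * ∫ y in 0..1, F u y := intervalIntegral.integral_const_mul _ _
      _ ≤ S / 2 * M := by gcongr; exact hM u hu
  calc _ ≤ ε * (M + (t - s) * (S / 2 * M)) := abs_intervalIntegral_two_scale_sub_average_le hF hF'
        (hasDerivAt_invSpeed ha hb hr (hac.differentiable one_ne_zero)) (periodic_invSpeed hbp r)
        hε hst hA hB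
    _ = ε * M * (1 + (t - s) / 2 * S) := by ring

theorem abs_sub_le_of_intervalIntegral_invSpeed_eq (hac : ContDiff ℝ 1 a) (hbc : Continuous b)
    (hbp : Periodic b 1) {V c x₀ t₀ ε α β S X c₁ : ℝ} (hV : ∀ x y, |a x * b y| ≤ V)
    (hc : t₀ * √(2 * (r + V)) ≤ c) (ht₀ : 0 < t₀) (hε : 0 < ε) (hα : 0 < α)
    (haJ : ∀ x ∈ Icc x₀ (x₀ + c), a x ∈ Icc α β)
    (hSJ : ∀ x ∈ Icc x₀ (x₀ + c), |deriv a x / a x| ≤ S)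
    (hX : ∫ x in x₀..X, invSpeed a b r x (x / ε) = t₀)
    (hc₁ : ∫ x in x₀..c₁, ∫ y in 0..1, invSpeed a b r x y = t₀) :
    |X - c₁| ≤ ε * √(β / α) * (1 + c / 2 * S) := by
  set F := invSpeed a b r
  set G := fun x => ∫ y in 0..1, F x y
  set J := Icc x₀ (x₀ + c)
  have hF : Continuous (uncurry F) := continuous_invSpeed ha hb hr hac.continuous hbc
  have hG : Continuous G := continuous_parametric_intervalIntegral_of_continuous' hF 0 1
  have hFε : Continuous fun x => F x (x / ε) :=
    hF.comp (continuous_id.prodMk (continuous_id.div_const ε))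
  have hm : 0 < (√(2 * (r + V)))⁻¹ :=
    inv_pos.2 (Real.sqrt_pos.2 (by linarith [abs_nonneg (a 0 * b 0), hV 0 0]))
  have hGm : ∀ x, (√(2 * (r + V)))⁻¹ ≤ G x := fun x => by
    simpa using integral_mono zero_le_one intervalIntegrable_const
      ((hF.uncurry_left x).intervalIntegrable (μ := volume) _ _) fun y =>
        inv_sqrt_le_invSpeed ha hb hr (hV x y)
  have hmem : ∀ {g : ℝ → ℝ}, Continuous g → (∀ x, (√(2 * (r + V)))⁻¹ ≤ g x) → ∀ z,
      ∫ x in x₀..z, g x = t₀ → z ∈ J := fun hg hgm z hz => by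
    obtain ⟨h₁, h₂⟩ := le_and_sub_le_of_intervalIntegral_eq hg hm hgm ht₀ hz
    rw [div_inv_eq_mul] at h₂
    exact ⟨h₁, by linarith⟩
  have hXJ : X ∈ J := hmem hFε (fun x => inv_sqrt_le_invSpeed ha hb hr (hV _ _)) X hX
  have hc₁J : c₁ ∈ J := hmem hG hGm c₁ hc₁
  obtain ⟨w, hwJ, hwmin⟩ := isCompact_Icc.exists_isMinOn ⟨X, hXJ⟩ hG.continuousOn
  have hGκ : ∀ u ∈ J, G u ≤ √(β / α) * G w := fun u hu => by
    rw [← intervalIntegral.integral_const_mul]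
    exact integral_mono zero_le_one ((hF.uncurry_left u).intervalIntegrable _ _)
      ((continuous_const.mul (hF.uncurry_left w)).intervalIntegrable _ _) fun y =>
      invSpeed_le_sqrt_div_mul_invSpeed ha hb hr hα (haJ u hu) (haJ w hwJ).2 y
  have hsub : Icc x₀ X ⊆ J := Icc_subset_Icc le_rfl hXJ.2
  have hupper := abs_intervalIntegral_invSpeed_sub_average_le ha hb hr hac hbc hbp hε hXJ.1
    (fun u hu => hSJ u (hsub hu)) (fun u hu => hGκ u (hsub hu))
  have hlower : G w * |X - c₁| ≤ |∫ x in x₀..X, (F x (x / ε) - G x)| := by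
    rw [integral_sub (hFε.intervalIntegrable _ _) (hG.intervalIntegrable _ _), hX, ← hc₁,
      integral_interval_sub_left (hG.intervalIntegrable _ _) (hG.intervalIntegrable _ _),
      abs_sub_comm]
    exact mul_abs_sub_le_abs_intervalIntegral hG fun x hx =>
      hwmin (ordConnected_Icc.uIcc_subset hXJ hc₁J hx)
  have hS : 0 ≤ S := (abs_nonneg _).trans (hSJ X hXJ)
  refine le_of_mul_le_mul_left (hlower.trans (hupper.trans ?_)) (hm.trans_le (hGm w))
  calc ε * (√(β / α) * G w) * (1 + (X - x₀) / 2 * S)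
      ≤ ε * (√(β / α) * G w) * (1 + c / 2 * S) :=
        mul_le_mul_of_nonneg_left (by gcongr; linarith [hXJ.2])
          (mul_nonneg hε.le (mul_nonneg (Real.sqrt_nonneg _) (hm.le.trans (hGm w))))
    _ = G w * (ε * √(β / α) * (1 + c / 2 * S)) := by ring

end InvSpeed

theorem endpoint_close_to_average_general
    (a b : ℝ → ℝ)
    (ha : ContDiff ℝ 1 a) (haBd : ∃ M : ℝ, ∀ x, |a x| ≤ M)
    (haPos : ∀ x, 0 < a x)
    (hb : Continuous b) (hbPer : Function.Periodic b 1)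
    (hbNonpos : ∀ y, b y ≤ 0)
    (R T r₀ : ℝ)
    (Vn : ℝ) (hVn : Vn = ⨆ q : ℝ × ℝ, |a q.1 * b q.2|)
    (c₀ : ℝ) (hc₀ : c₀ = T * Real.sqrt (2 * (r₀ + Vn)))
    (αT : ℝ) (hαT : αT = sInf (a '' Set.Icc (-R) (R + c₀)))
    (βT : ℝ) (hβT : βT = sSup (a '' Set.Icc (-R) (R + c₀)))
    (CK : ℝ) (hCK : CK = Real.sqrt (βT / αT) *
      (2 + c₀ / 2 * sSup ((fun x => |deriv a x / a x|) '' Set.Icc (-R) (R + c₀))))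
    (x₀ t₀ : ℝ) (hx₀ : x₀ ∈ Set.Icc (-R) R) (ht₀ : t₀ ∈ Set.Ioc (0 : ℝ) T)
    (ε : ℝ) (hε : ε ∈ Set.Ioo (0 : ℝ) 1)
    (r : ℝ) (hr : 0 < r) (hrr₀ : r < r₀)
    (η : ℝ → ℝ) (hη0 : η 0 = x₀ / ε)
    (hηd : ∀ s ∈ Set.Icc (0 : ℝ) (t₀ / ε),
      HasDerivAt η (Real.sqrt (2 * (r - a (ε * η s) * b (η s)))) s)
    (c₁ : ℝ)
    (hc₁t : (∫ x in x₀..c₁, ∫ y in (0 : ℝ)..1,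
      (Real.sqrt (2 * (r - a x * b y)))⁻¹) = t₀) :
    |ε * η (t₀ / ε) - c₁| ≤ CK * ε := by
  obtain ⟨hε0, -⟩ := hε
  set I₀ := Icc (-R) (R + c₀)
  set S := sSup ((fun x => |deriv a x / a x|) '' I₀)
  have hV : ∀ x y, |a x * b y| ≤ Vn := hVn ▸ abs_mul_le_iSup_abs_mul haBd
    ((hbPer.isBounded_of_continuous one_ne_zero hb).exists_norm_le.imp fun _ hM y => hM _ ⟨y, rfl⟩)
  have hc : t₀ * √(2 * (r + Vn)) ≤ c₀ := hc₀ ▸ mul_le_mul ht₀.2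
    (Real.sqrt_le_sqrt (by linarith)) (Real.sqrt_nonneg _) (ht₀.1.le.trans ht₀.2)
  have hJ : Icc x₀ (x₀ + c₀) ⊆ I₀ := Icc_subset_Icc (by linarith [hx₀.1]) (by linarith [hx₀.2])
  have hI₀ : IsCompact I₀ := isCompact_Icc
  have hα : 0 < αT := by
    have hc₀ : 0 ≤ c₀ := (mul_nonneg ht₀.1.le (Real.sqrt_nonneg _)).trans hc
    have hne : I₀.Nonempty := ⟨x₀, hJ (left_mem_Icc.2 (by linarith))⟩
    obtain ⟨x, -, hx⟩ := (hI₀.image ha.continuous).sInf_mem (hne.image a)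
    exact hαT ▸ hx ▸ haPos x
  have haJ : ∀ x ∈ Icc x₀ (x₀ + c₀), a x ∈ Icc αT βT := fun x hx => hαT ▸ hβT ▸
    ⟨csInf_le (hI₀.image ha.continuous).bddBelow (mem_image_of_mem a (hJ hx)),
      le_csSup (hI₀.image ha.continuous).bddAbove (mem_image_of_mem a (hJ hx))⟩
  have hSJ : ∀ x ∈ Icc x₀ (x₀ + c₀), |deriv a x / a x| ≤ S := fun x hx =>
    le_csSup (hI₀.image (((ha.continuous_deriv le_rfl).div ha.continuous
      fun x => (haPos x).ne').abs)).bddAbove (mem_image_of_mem _ (hJ hx))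
  have hX : ∫ x in x₀..ε * η (t₀ / ε), invSpeed a b r x (x / ε) = t₀ := by
    have := intervalIntegral_comp_div_eq_of_hasDerivAt
      (continuous_invSpeed haPos hbNonpos hr ha.continuous hb)
      (fun x y => (invSpeed_pos haPos hbNonpos hr x y).ne') hε0 (div_pos ht₀.1 hε0).le
      (fun s hs => by simpa [invSpeed] using hηd s hs)
    rwa [hη0, mul_div_cancel₀ _ hε0.ne', mul_div_cancel₀ _ hε0.ne'] at this
  calc |ε * η (t₀ / ε) - c₁|
      ≤ ε * √(βT / αT) * (1 + c₀ / 2 * S) := abs_sub_le_of_intervalIntegral_invSpeed_eq haPos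
        hbNonpos hr ha hb hbPer hV hc ht₀.1 hε0 hα haJ hSJ hX hc₁t
    _ ≤ CK * ε := by
      rw [hCK]
      nlinarith [mul_nonneg hε0.le (Real.sqrt_nonneg (βT / αT))]

/-- Positive-energy trajectories end, after rescaling, within `C_K·ε` of the
point `c_{1,r}` determined by the averaged travel-time identity. -/
theorem endpoint_close_to_average
    (a b : ℝ → ℝ)
    (ha : ContDiff ℝ 1 a) (haBd : ∃ M : ℝ, ∀ x, |a x| ≤ M)
    (haPos : ∀ x, 0 < a x)
    (hb : Continuous b) (hbPer : Function.Periodic b 1)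
    (hbNonpos : ∀ y, b y ≤ 0) (hbMax : ∃ y₀, b y₀ = 0)
    (R T r₀ : ℝ) (hR : 0 < R) (hT : 0 < T) (hr₀ : 0 < r₀)
    (Vn : ℝ) (hVn : Vn = ⨆ q : ℝ × ℝ, |a q.1 * b q.2|)
    (c₀ : ℝ) (hc₀ : c₀ = T * Real.sqrt (2 * (r₀ + Vn)))
    (αT : ℝ) (hαT : αT = sInf (a '' Set.Icc (-R) (R + c₀)))
    (βT : ℝ) (hβT : βT = sSup (a '' Set.Icc (-R) (R + c₀)))
    (CK : ℝ) (hCK : CK = Real.sqrt (βT / αT) *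
      (2 + c₀ / 2 * sSup ((fun x => |deriv a x / a x|) '' Set.Icc (-R) (R + c₀))))
    (x₀ t₀ : ℝ) (hx₀ : x₀ ∈ Set.Icc (-R) R) (ht₀ : t₀ ∈ Set.Ioc (0 : ℝ) T)
    (ε : ℝ) (hε : ε ∈ Set.Ioo (0 : ℝ) 1)
    (r : ℝ) (hr : 0 < r) (hrr₀ : r < r₀)
    (η : ℝ → ℝ) (hη0 : η 0 = x₀ / ε)
    (hηd : ∀ s ∈ Set.Icc (0 : ℝ) (t₀ / ε),
      HasDerivAt η (Real.sqrt (2 * (r - a (ε * η s) * b (η s)))) s)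
    (c₁ : ℝ) (hc₁ : x₀ ≤ c₁)
    (hc₁t : (∫ x in x₀..c₁, ∫ y in (0 : ℝ)..1,
      (Real.sqrt (2 * (r - a x * b y)))⁻¹) = t₀) :
    |ε * η (t₀ / ε) - c₁| ≤ CK * ε :=
  endpoint_close_to_average_general a b ha haBd haPos hb hbPer hbNonpos R T r₀ Vn hVn c₀ hc₀ αT hαT
    βT hβT CK hCK x₀ t₀ hx₀ ht₀ ε hε r hr hrr₀ η hη0 hηd c₁ hc₁t
end

section
/- Let F ∈ C¹(ℝ × ℝ) be 1-periodic in its second variable, i.e., F(x, y+1) = F(x, y) for all x, y. Then for any real numbers a < b and any ε > 0, | ∫_a^b F(x, x/ε) dx − ∫_a^b ( ∫₀¹ F(x,y) dy ) dx | ≤ C·ε, where C = 2·max_{x∈[a,b]} ∫₀¹ |F(x,y)| dy + (b − a)·max_{x∈[a,b]} ∫₀¹ |∂F/∂x (x,y)| dy. -/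
/-!
For fixed `x`, the centered primitive `P x t = ∫₀ᵗ F x - t ∫₀¹ F x` is `1`-periodic in `t`, hence
bounded by `∫₀¹ |F x|`. By the chain rule and the Leibniz rule,
`d/dx (ε P x (x/ε)) = F x (x/ε) - ∫₀¹ F x + ε P' x (x/ε)`, where `P'` is the centered primitive of
`∂ₓF`. Integrating over `[a, b]`, the two boundary terms contribute at most `2 ε max ∫₀¹ |F x|`
and the remainder at most `ε (b - a) max ∫₀¹ |∂ₓF x|`.
-/

open intervalIntegral MeasureTheory Set Function

noncomputable def centeredPrimitive (f : ℝ → ℝ) (t : ℝ) : ℝ :=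
  (∫ y in (0 : ℝ)..t, f y) - t * ∫ y in (0 : ℝ)..1, f y

section CenteredPrimitive

variable {f : ℝ → ℝ}

theorem centeredPrimitive_periodic (hf : Periodic f 1)
    (hint : IntervalIntegrable f volume 0 1) : Periodic (centeredPrimitive f) 1 := by
  intro t
  have hint' := hf.intervalIntegrable₀ one_ne_zero hint
  simp only [centeredPrimitive, hf.intervalIntegral_add_eq_add 0 t hint', zero_add]
  ring

theorem abs_centeredPrimitive_le_of_mem_Icc (hint : IntervalIntegrable f volume 0 1)
    {s : ℝ} (hs : s ∈ Icc (0 : ℝ) 1) :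
    |centeredPrimitive f s| ≤ ∫ y in (0 : ℝ)..1, |f y| := by
  obtain ⟨h0, h1⟩ := hs
  have hint₁ : IntervalIntegrable f volume 0 s :=
    hint.mono_set (by simpa [uIcc_of_le, h0] using Icc_subset_Icc le_rfl h1)
  have hint₂ : IntervalIntegrable f volume s 1 :=
    hint.mono_set (by simpa [uIcc_of_le, h1] using Icc_subset_Icc h0 le_rfl)
  have habs : IntervalIntegrable (fun y => |f y|) volume 0 1 := hint.abs
  have hleft : |∫ y in (0 : ℝ)..s, f y| ≤ ∫ y in (0 : ℝ)..1, |f y| :=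
    (abs_integral_le_integral_abs h0).trans <|
      integral_mono_interval le_rfl h0 h1 (.of_forall fun _ => abs_nonneg _) habs
  have hright : |∫ y in s..1, f y| ≤ ∫ y in (0 : ℝ)..1, |f y| :=
    (abs_integral_le_integral_abs h1).trans <|
      integral_mono_interval h0 h1 le_rfl (.of_forall fun _ => abs_nonneg _) habs
  have hsplit : centeredPrimitive f s
      = (1 - s) * (∫ y in (0 : ℝ)..s, f y) - s * ∫ y in s..1, f y := by
    rw [centeredPrimitive, ← integral_add_adjacent_intervals hint₁ hint₂]
    ring
  calc |centeredPrimitive f s|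
      ≤ (1 - s) * |∫ y in (0 : ℝ)..s, f y| + s * |∫ y in s..1, f y| := by
        rw [hsplit]
        refine (abs_sub _ _).trans_eq ?_
        rw [abs_mul, abs_mul, abs_of_nonneg (sub_nonneg.2 h1), abs_of_nonneg h0]
    _ ≤ (1 - s) * (∫ y in (0 : ℝ)..1, |f y|) + s * ∫ y in (0 : ℝ)..1, |f y| := by
        gcongr
    _ = ∫ y in (0 : ℝ)..1, |f y| := by ring

theorem abs_centeredPrimitive_le (hf : Periodic f 1) (hint : IntervalIntegrable f volume 0 1)
    (t : ℝ) : |centeredPrimitive f t| ≤ ∫ y in (0 : ℝ)..1, |f y| := by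
  rw [← (centeredPrimitive_periodic hf hint).sub_int_mul_eq ⌊t⌋, mul_one, ← Int.fract]
  exact abs_centeredPrimitive_le_of_mem_Icc hint ⟨Int.fract_nonneg t, (Int.fract_lt_one t).le⟩

end CenteredPrimitive

theorem ContDiff.hasDerivAt_partial_fst {F : ℝ → ℝ → ℝ} (hF : ContDiff ℝ 1 (uncurry F))
    (x y : ℝ) : HasDerivAt (F · y) (fderiv ℝ (uncurry F) (x, y) (1, 0)) x :=
  (hF.differentiable one_ne_zero (x, y)).hasFDerivAt.comp_hasDerivAt (f := fun x => (x, y)) x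
    ((hasDerivAt_id' x).prodMk (hasDerivAt_const x y))

theorem ContDiff.continuous_deriv_partial_fst {F : ℝ → ℝ → ℝ} (hF : ContDiff ℝ 1 (uncurry F)) :
    Continuous (uncurry fun x y => deriv (F · y) x) := by
  have hpartial : (uncurry fun x y => deriv (F · y) x)
      = fun q => fderiv ℝ (uncurry F) q (1, 0) :=
    funext fun q => (hF.hasDerivAt_partial_fst q.1 q.2).deriv
  rw [hpartial]
  exact (hF.continuous_fderiv one_ne_zero).clm_apply continuous_const

section ParametricIntegral

variable {F F' : ℝ → ℝ → ℝ}

theorem hasDerivAt_intervalIntegral_param (hF : Continuous (uncurry F))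
    (hF' : Continuous (uncurry F')) (hd : ∀ x y, HasDerivAt (F · y) (F' x y) x) (u v x₀ : ℝ) :
    HasDerivAt (fun x => ∫ y in u..v, F x y) (∫ y in u..v, F' x₀ y) x₀ := by
  obtain ⟨M, hM⟩ := (isCompact_Icc.prod isCompact_uIcc).exists_bound_of_continuousOn
    (s := Icc (x₀ - 1) (x₀ + 1) ×ˢ uIcc u v) hF'.continuousOn
  refine (hasDerivAt_integral_of_dominated_loc_of_deriv_le (bound := fun _ => M)
    (Metric.ball_mem_nhds x₀ one_pos) (.of_forall fun x => ?_) ?_ ?_ ?_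
    intervalIntegrable_const ?_).2
  · exact (hF.comp (Continuous.prodMk_right x)).aestronglyMeasurable
  · exact (hF.comp (Continuous.prodMk_right x₀)).intervalIntegrable _ _
  · exact (hF'.comp (Continuous.prodMk_right x₀)).aestronglyMeasurable
  · refine .of_forall fun y hy x hx => hM (x, y) ⟨?_, uIoc_subset_uIcc hy⟩
    rw [← Real.closedBall_eq_Icc]
    exact Metric.ball_subset_closedBall hx
  · exact .of_forall fun y _ x _ => hd x y

theorem hasDerivAt_intervalIntegral_leibniz (hF : Continuous (uncurry F))
    (hF' : Continuous (uncurry F')) (hd : ∀ x y, HasDerivAt (F · y) (F' x y) x)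
    (a : ℝ) {g : ℝ → ℝ} {g' x₀ : ℝ} (hg : HasDerivAt g g' x₀) :
    HasDerivAt (fun x => ∫ y in a..g x, F x y)
      ((∫ y in a..g x₀, F' x₀ y) + F x₀ (g x₀) * g') x₀ := by
  have hΦ := hasStrictFDerivAt_uncurry_coprod (u := (x₀, g x₀))
    (f := fun x t => ∫ y in a..t, F x y)
    (f₁ := fun x t => ContinuousLinearMap.toSpanSingleton ℝ (∫ y in a..t, F' x y))
    (f₂ := fun x t => ContinuousLinearMap.toSpanSingleton ℝ (F x t))
    (.of_forall fun v => hasDerivAt_intervalIntegral_param hF hF' hd a v.2 v.1)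
    (.of_forall fun v => (hF.comp (Continuous.prodMk_right v.1)).integral_hasStrictDerivAt a v.2
      |>.hasDerivAt)
    (ContinuousLinearMap.toSpanSingletonCLE.continuous.comp
      (continuous_parametric_primitive_of_continuous hF')).continuousAt
    (ContinuousLinearMap.toSpanSingletonCLE.continuous.comp hF).continuousAt
  refine (hΦ.hasFDerivAt.comp_hasDerivAt x₀ ((hasDerivAt_id x₀).prodMk hg)).congr_deriv ?_
  simp [HasUncurry.uncurry, mul_comm]

theorem continuous_centeredPrimitive_comp (hF : Continuous (uncurry F)) {g : ℝ → ℝ}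
    (hg : Continuous g) : Continuous fun x => centeredPrimitive (F x) (g x) :=
  (continuous_parametric_intervalIntegral_of_continuous hF hg).sub
    (hg.mul (continuous_parametric_intervalIntegral_of_continuous' hF 0 1))

theorem hasDerivAt_centeredPrimitive_comp (hF : Continuous (uncurry F))
    (hF' : Continuous (uncurry F')) (hd : ∀ x y, HasDerivAt (F · y) (F' x y) x)
    {g : ℝ → ℝ} {g' x₀ : ℝ} (hg : HasDerivAt g g' x₀) :
    HasDerivAt (fun x => centeredPrimitive (F x) (g x))
      (centeredPrimitive (F' x₀) (g x₀) + (F x₀ (g x₀) - ∫ y in (0 : ℝ)..1, F x₀ y) * g') x₀ := by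
  refine ((hasDerivAt_intervalIntegral_leibniz hF hF' hd 0 hg).sub
    (hg.mul (hasDerivAt_intervalIntegral_param hF hF' hd 0 1 x₀))).congr_deriv ?_
  rw [centeredPrimitive]
  ring

theorem integral_oscillating_sub_integral_mean (hF : Continuous (uncurry F))
    (hF' : Continuous (uncurry F')) (hd : ∀ x y, HasDerivAt (F · y) (F' x y) x)
    (a b : ℝ) {ε : ℝ} (hε : ε ≠ 0) :
    (∫ x in a..b, F x (x / ε)) - ∫ x in a..b, ∫ y in (0 : ℝ)..1, F x y
      = ε * (centeredPrimitive (F b) (b / ε) - centeredPrimitive (F a) (a / ε)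
        - ∫ x in a..b, centeredPrimitive (F' x) (x / ε)) := by
  have hdiv : Continuous fun x : ℝ => x / ε := continuous_id.div_const ε
  have hosc : Continuous fun x => F x (x / ε) := hF.comp (continuous_id.prodMk hdiv)
  have hmean : Continuous fun x => ∫ y in (0 : ℝ)..1, F x y :=
    continuous_parametric_intervalIntegral_of_continuous' hF 0 1
  have hcorr : Continuous fun x => centeredPrimitive (F' x) (x / ε) :=
    continuous_centeredPrimitive_comp hF' hdiv
  have hderiv : ∀ x ∈ uIcc a b, HasDerivAt (fun x => ε * centeredPrimitive (F x) (x / ε))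
      (F x (x / ε) - (∫ y in (0 : ℝ)..1, F x y) + ε * centeredPrimitive (F' x) (x / ε)) x := by
    intro x _
    refine ((hasDerivAt_centeredPrimitive_comp hF hF' hd
      ((hasDerivAt_id' x).div_const ε)).const_mul ε).congr_deriv ?_
    field_simp
    ring
  have hFTC := integral_eq_sub_of_hasDerivAt hderiv
    (((hosc.sub hmean).add (continuous_const.mul hcorr)).intervalIntegrable a b)
  rw [integral_add ((hosc.intervalIntegrable a b).sub (hmean.intervalIntegrable a b))
      ((hcorr.intervalIntegrable a b).const_mul ε),
    integral_sub (hosc.intervalIntegrable a b) (hmean.intervalIntegrable a b),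
    intervalIntegral.integral_const_mul] at hFTC
  linarith

theorem abs_integral_oscillating_sub_integral_mean_le (hF : Continuous (uncurry F))
    (hF' : Continuous (uncurry F')) (hd : ∀ x y, HasDerivAt (F · y) (F' x y) x)
    (hper : ∀ x, Periodic (F x) 1) {a b ε M M' : ℝ} (hab : a ≤ b) (hε : 0 < ε)
    (hM : ∀ x ∈ Icc a b, ∫ y in (0 : ℝ)..1, |F x y| ≤ M)
    (hM' : ∀ x ∈ Icc a b, ∫ y in (0 : ℝ)..1, |F' x y| ≤ M') :
    |(∫ x in a..b, F x (x / ε)) - ∫ x in a..b, ∫ y in (0 : ℝ)..1, F x y|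
      ≤ (2 * M + (b - a) * M') * ε := by
  have hper' : ∀ x, Periodic (F' x) 1 := fun x y =>
    (hd x (y + 1)).unique (by simpa only [hper _ y] using hd x y)
  have hboundary : ∀ x ∈ Icc a b, |centeredPrimitive (F x) (x / ε)| ≤ M := fun x hx =>
    (abs_centeredPrimitive_le (hper x)
      ((hF.comp (Continuous.prodMk_right x)).intervalIntegrable 0 1) _).trans (hM x hx)
  have hremainder : |∫ x in a..b, centeredPrimitive (F' x) (x / ε)| ≤ M' * (b - a) := by
    rw [← Real.norm_eq_abs, ← abs_of_nonneg (sub_nonneg.2 hab)]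
    refine norm_integral_le_of_norm_le_const fun x hx => ?_
    rw [uIoc_of_le hab] at hx
    exact (abs_centeredPrimitive_le (hper' x)
      ((hF'.comp (Continuous.prodMk_right x)).intervalIntegrable 0 1) _).trans
        (hM' x (Ioc_subset_Icc_self hx))
  rw [integral_oscillating_sub_integral_mean hF hF' hd a b hε.ne']
  have ha := hboundary a ⟨le_rfl, hab⟩
  have hb := hboundary b ⟨hab, le_rfl⟩
  rw [abs_mul, abs_of_pos hε]
  calc ε * |_ - _ - _|
      ≤ ε * (|centeredPrimitive (F b) (b / ε)| + |centeredPrimitive (F a) (a / ε)|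
        + |∫ x in a..b, centeredPrimitive (F' x) (x / ε)|) := by
        gcongr
        exact (abs_sub _ _).trans (add_le_add_left (abs_sub _ _) _)
    _ ≤ ε * (M + M + M' * (b - a)) := by gcongr
    _ = (2 * M + (b - a) * M') * ε := by ring

end ParametricIntegral

/-- Quantitative ergodic theorem for periodic functions in one dimension:
the oscillatory integral of `F(x, x/ε)` differs from the integral of its
`y`-average by at most an explicit constant times `ε`. -/
theorem quantitative_ergodic
    (F : ℝ → ℝ → ℝ) (hF : ContDiff ℝ 1 fun q : ℝ × ℝ => F q.1 q.2)
    (hper : ∀ x y : ℝ, F x (y + 1) = F x y)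
    (a b : ℝ) (hab : a < b) (ε : ℝ) (hε : 0 < ε)
    (C : ℝ)
    (hC : C = 2 * sSup ((fun x => ∫ y in (0 : ℝ)..1, |F x y|) '' Set.Icc a b)
      + (b - a) * sSup ((fun x => ∫ y in (0 : ℝ)..1,
          |deriv (fun x' => F x' y) x|) '' Set.Icc a b)) :
    |(∫ x in a..b, F x (x / ε))
      - ∫ x in a..b, ∫ y in (0 : ℝ)..1, F x y| ≤ C * ε := by
  have hd : ∀ x y, HasDerivAt (F · y) (deriv (F · y) x) x := fun x y =>
    (hF.hasDerivAt_partial_fst x y).differentiableAt.hasDerivAt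
  have hle_sSup : ∀ {G : ℝ → ℝ → ℝ}, Continuous (uncurry G) → ∀ x ∈ Icc a b,
      ∫ y in (0 : ℝ)..1, |G x y| ≤ sSup ((fun x => ∫ y in (0 : ℝ)..1, |G x y|) '' Icc a b) :=
    @fun G hG _ hx => ContinuousOn.le_sSup_image_Icc
      (continuous_parametric_intervalIntegral_of_continuous'
        (f := fun x y => |G x y|) hG.abs 0 1).continuousOn hx
  rw [hC]
  exact abs_integral_oscillating_sub_integral_mean_le hF.continuous
    hF.continuous_deriv_partial_fst hd hper hab.le hε
    (hle_sSup hF.continuous) (hle_sSup hF.continuous_deriv_partial_fst)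
end
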